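/- Let i be a positive integer and let h denote coefficients in the Hirzebruch L-polynomials. Then 2·h_{i,i} + h_{2i} = h_i², where h_{i,i} is the coefficient of p_i² in L_{2i}. -/

import Mathlib

open MvPolynomial

noncomputable section

/-- The total Pontryagin-class variable of the first factor: `p'_k`,
with `p'_0 = 1`.  Variables are indexed by positive integers `k`. -/
def pFst (k : ℕ) : MvPolynomial (ℕ ⊕ ℕ) ℚ := if k = 0 then 1 else X (Sum.inl k)

/-- `p''_k` for the second factor, with `p''_0 = 1`. -/
def pSnd (k : ℕ) : MvPolynomial (ℕ ⊕ ℕ) ℚ := if k = 0 then 1 else X (Sum.inr k)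

/-- The `k`-th Pontryagin class of a product, via the Whitney formula:
`p_k = ∑_{a+b=k} p'_a p''_b`. -/
def pProd (k : ℕ) : MvPolynomial (ℕ ⊕ ℕ) ℚ :=
  ∑ a ∈ Finset.range (k + 1), pFst a * pSnd (k - a)

/-- A multiplicative sequence of polynomials `L_n` in the variables
`p_1, p_2, …` (variable `k ≥ 1` of `MvPolynomial ℕ ℚ` stands for `p_k`;
variable `0` is unused): `L_0 = 1`, each `L_n` is homogeneous of weighted
degree `n` (where `p_k` has weight `k`), and the sequence satisfies
`L_n(p(ξ×η)) = ∑_{i+j=n} L_i(p(ξ)) L_j(p(η))`.  The Hirzebruch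
`L`-polynomials (associated to `√t/tanh √t`) form such a sequence. -/
def IsMultiplicativeSeq (L : ℕ → MvPolynomial ℕ ℚ) : Prop :=
  L 0 = 1 ∧
  (∀ n d, coeff d (L n) ≠ 0 → d 0 = 0) ∧
  (∀ n d, coeff d (L n) ≠ 0 → (d.sum fun k e => k * e) = n) ∧
  (∀ n, aeval pProd (L n) =
    ∑ i ∈ Finset.range (n + 1), aeval pFst (L i) * aeval pSnd (L (n - i)))

/-- `h_i`: the coefficient of `p_i` in `L_i`. -/
def h1 (L : ℕ → MvPolynomial ℕ ℚ) (i : ℕ) : ℚ :=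
  coeff (Finsupp.single i 1) (L i)

/-- `h_{i,j}`: the coefficient of `p_i p_j` in `L_{i+j}` (of `p_i²` in `L_{2i}` if `i = j`). -/
def h2 (L : ℕ → MvPolynomial ℕ ℚ) (i j : ℕ) : ℚ :=
  coeff (Finsupp.single i 1 + Finsupp.single j 1) (L (i + j))

/-- `h_{i,j,k}`: the coefficient of `p_i p_j p_k` in `L_{i+j+k}`. -/
def h3 (L : ℕ → MvPolynomial ℕ ℚ) (i j k : ℕ) : ℚ :=
  coeff (Finsupp.single i 1 + Finsupp.single j 1 + Finsupp.single k 1) (L (i + j + k))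

end

/-!
Encode a total Pontryagin class `1 + p_1 t + p_2 t² + ⋯` by the polynomial in `t` with these
coefficients; the Whitney formula is then multiplication of polynomials. Feed the bundle with total
class `1 + t^i` (so `p_i = 1`, all other `p_k = 0`) into both factors. The product has class
`(1 + t^i)² = 1 + 2 t^i + t^{2i}`, and by weighted homogeneity only the monomials `p_i²` and `p_{2i}`
of `L_{2i}` survive, giving `4 h_{i,i} + h_{2i}`. On the other side only
`L_0 L_{2i} + L_i L_i + L_{2i} L_0 = 2 h_{i,i} + h_i²` survives.
-/

open MvPolynomial Finsupp Finset
open scoped Polynomial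

namespace MvPolynomial

theorem aeval_eq_sum_of_forall_ne_zero {σ R A : Type*} [CommSemiring R] [CommSemiring A]
    [Algebra R A] (g : σ → A) (P : MvPolynomial σ R)
    (T : Finset (σ →₀ ℕ)) (hT : ∀ d, coeff d P ≠ 0 → (∀ k ∈ d.support, g k ≠ 0) → d ∈ T) :
    aeval g P = ∑ d ∈ T, aeval g (monomial d (coeff d P)) := by
  classical
  have hvanish : ∀ d ∈ P.support, d ∉ T → aeval g (monomial d (coeff d P)) = 0 := by
    intro d hd hdT
    obtain ⟨k, hk, hgk⟩ : ∃ k ∈ d.support, g k = 0 := by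
      by_contra! h
      exact hdT (hT d (MvPolynomial.mem_support_iff.mp hd) h)
    rw [aeval_monomial, Finsupp.prod, Finset.prod_eq_zero hk
      (by rw [hgk, zero_pow (Finsupp.mem_support_iff.mp hk)]), mul_zero]
  calc aeval g P = ∑ d ∈ P.support ∪ T, aeval g (monomial d (coeff d P)) := by
        conv_lhs => rw [P.as_sum, map_sum]
        exact Finset.sum_subset subset_union_left fun d _ hd => by
          rw [notMem_support_iff.mp hd, monomial_zero, map_zero]
    _ = ∑ d ∈ T, aeval g (monomial d (coeff d P)) := by
        refine (Finset.sum_subset subset_union_right fun d hd hdT => ?_).symm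
        exact hvanish d ((mem_union.mp hd).resolve_right hdT) hdT

end MvPolynomial

namespace Finsupp

theorem eq_single_of_weight_id_eq {d : ℕ →₀ ℕ} {i n : ℕ} (hi : 0 < i)
    (hsupp : ∀ k ∈ d.support, k = i) (hw : weight id d = n) : d = single i (n / i) := by
  have hd : d = single i (d i) :=
    support_subset_singleton.mp fun k hk => Finset.mem_singleton.mpr (hsupp k hk)
  rw [hd, weight_single, smul_eq_mul, id] at hw
  rw [hd, ← hw, Nat.mul_div_cancel _ hi]

theorem eq_single_or_eq_single_of_weight_id_eq {d : ℕ →₀ ℕ} {i : ℕ} (hi : 0 < i)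
    (hsupp : ∀ k ∈ d.support, k = i ∨ k = 2 * i) (hw : weight id d = 2 * i) :
    d = single i 2 ∨ d = single (2 * i) 1 := by
  have hd : d = single i (d i) + single (2 * i) (d (2 * i)) := by
    ext k
    by_cases hk : k ∈ d.support
    · rcases hsupp k hk with rfl | rfl <;> simp [hi.ne']
    · simp only [coe_add, Pi.add_apply, single_apply]
      split_ifs <;> simp_all
  rw [hd, map_add, weight_single, weight_single, smul_eq_mul, smul_eq_mul, id, id] at hw
  have hsum : d i + 2 * d (2 * i) = 2 := Nat.eq_of_mul_eq_mul_right hi (by linarith)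
  obtain ⟨h₁, h₂⟩ | ⟨h₁, h₂⟩ : (d i = 2 ∧ d (2 * i) = 0) ∨ (d i = 0 ∧ d (2 * i) = 1) := by omega
  · left; rw [hd, h₁, h₂, single_zero, add_zero]
  · right; rw [hd, h₁, h₂, single_zero, zero_add]

end Finsupp

namespace MvPolynomial.IsWeightedHomogeneous

variable {R A : Type*} [CommSemiring R] [CommSemiring A] [Algebra R A]
  {P : MvPolynomial ℕ R} {i : ℕ}

theorem aeval_eq_of_apply_eq_zero {n : ℕ} (hi : 0 < i) (h0 : ∀ d, coeff d P ≠ 0 → d 0 = 0)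
    (hP : IsWeightedHomogeneous id P n) (g : ℕ → A)
    (hg : ∀ k, k ≠ 0 → k ≠ i → g k = 0) :
    aeval g P = algebraMap R A (coeff (single i (n / i)) P) * g i ^ (n / i) := by
  rw [aeval_eq_sum_of_forall_ne_zero g P {single i (n / i)}, sum_singleton, aeval_monomial,
    prod_single_index (h := fun k e => g k ^ e) (pow_zero _)]
  refine fun d hd hgd => mem_singleton.mpr (eq_single_of_weight_id_eq hi (fun k hk => ?_) (hP hd))
  by_contra hki
  have hk0 : k ≠ 0 := by rintro rfl; exact Finsupp.mem_support_iff.mp hk (h0 d hd)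
  exact hgd k hk (hg k hk0 hki)

theorem aeval_eq_of_apply_eq_zero₂ (hi : 0 < i) (h0 : ∀ d, coeff d P ≠ 0 → d 0 = 0)
    (hP : IsWeightedHomogeneous id P (2 * i)) (g : ℕ → A)
    (hg : ∀ k, k ≠ 0 → k ≠ i → k ≠ 2 * i → g k = 0) :
    aeval g P = algebraMap R A (coeff (single i 2) P) * g i ^ 2
      + algebraMap R A (coeff (single (2 * i) 1) P) * g (2 * i) := by
  have hne : single i 2 ≠ single (2 * i) 1 := by
    rw [Ne, single_eq_single_iff]; omega
  rw [aeval_eq_sum_of_forall_ne_zero g P {single i 2, single (2 * i) 1}, sum_pair hne,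
    aeval_monomial, aeval_monomial, prod_single_index (h := fun k e => g k ^ e) (pow_zero _),
    prod_single_index (h := fun k e => g k ^ e) (pow_zero _), pow_one]
  intro d hd hgd
  rw [mem_insert, mem_singleton]
  refine eq_single_or_eq_single_of_weight_id_eq hi (fun k hk => ?_) (hP hd)
  by_contra! hki
  have hk0 : k ≠ 0 := by rintro rfl; exact Finsupp.mem_support_iff.mp hk (h0 d hd)
  exact hgd k hk (hg k hk0 hki.1 hki.2)

end MvPolynomial.IsWeightedHomogeneous

theorem h2_self (L : ℕ → MvPolynomial ℕ ℚ) (i : ℕ) :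
    h2 L i i = coeff (single i 2) (L (2 * i)) := by
  rw [h2, ← single_add, two_mul]

namespace IsMultiplicativeSeq

variable {L : ℕ → MvPolynomial ℕ ℚ}

theorem isWeightedHomogeneous (hL : IsMultiplicativeSeq L) (n : ℕ) :
    IsWeightedHomogeneous id (L n) n := fun d hd => by
  rw [weight_apply, ← hL.2.2.1 n d hd]
  exact Finsupp.sum_congr fun k _ => by rw [smul_eq_mul, id, mul_comm]

theorem aeval_coeff_mul (hL : IsMultiplicativeSeq L) {A : Type*} [CommSemiring A] [Algebra ℚ A]
    (f g : A[X]) (hf : f.coeff 0 = 1) (hg : g.coeff 0 = 1) (n : ℕ) :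
    aeval (f * g).coeff (L n) =
      ∑ j ∈ range (n + 1), aeval f.coeff (L j) * aeval g.coeff (L (n - j)) := by
  set u : ℕ ⊕ ℕ → A := Sum.elim f.coeff g.coeff
  have hFst : ∀ k, aeval u (pFst k) = f.coeff k := by
    intro k; rcases eq_or_ne k 0 with rfl | hk <;> simp [pFst, u, *]
  have hSnd : ∀ k, aeval u (pSnd k) = g.coeff k := by
    intro k; rcases eq_or_ne k 0 with rfl | hk <;> simp [pSnd, u, *]
  have hProd : ∀ k, aeval u (pProd k) = (f * g).coeff k := by
    intro k
    simp only [pProd, map_sum, map_mul, hFst, hSnd, Polynomial.coeff_mul,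
      Nat.sum_antidiagonal_eq_sum_range_succ fun a b => f.coeff a * g.coeff b]
  have hComp : ∀ (p : ℕ → MvPolynomial (ℕ ⊕ ℕ) ℚ) P,
      aeval u (aeval p P) = aeval (fun k => aeval u (p k)) P :=
    fun p => DFunLike.congr_fun (comp_aeval p (aeval u))
  have key := congrArg (aeval u) (hL.2.2.2 n)
  simpa only [map_sum, map_mul, hComp, hFst, hSnd, hProd] using key

theorem aeval_coeff_one_add_X_pow (hL : IsMultiplicativeSeq L) {i : ℕ} (hi : 0 < i) (n : ℕ) :
    aeval (1 + Polynomial.X ^ i : ℚ[X]).coeff (L n) = coeff (single i (n / i)) (L n) := by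
  rw [(hL.isWeightedHomogeneous n).aeval_eq_of_apply_eq_zero hi (hL.2.1 n) _
    fun k hk0 hki => by simp [Polynomial.coeff_one, Polynomial.coeff_X_pow, hk0, hki]]
  simp [Polynomial.coeff_one, Polynomial.coeff_X_pow, hi.ne']

theorem aeval_coeff_one_add_X_pow_mul_self (hL : IsMultiplicativeSeq L) {i : ℕ} (hi : 0 < i) :
    aeval ((1 + Polynomial.X ^ i) * (1 + Polynomial.X ^ i) : ℚ[X]).coeff (L (2 * i)) =
      4 * h2 L i i + h1 L (2 * i) := by
  have hsq : (1 + Polynomial.X ^ i) * (1 + Polynomial.X ^ i) =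
      (1 + 2 * Polynomial.X ^ i + Polynomial.X ^ (2 * i) : ℚ[X]) := by ring
  rw [hsq, (hL.isWeightedHomogeneous (2 * i)).aeval_eq_of_apply_eq_zero₂ hi (hL.2.1 _) _
    fun k hk0 hki hk2i => by simp [Polynomial.coeff_one, Polynomial.coeff_X_pow, hk0, hki, hk2i]]
  simp [Polynomial.coeff_one, Polynomial.coeff_X_pow, hi.ne', h2_self, h1]
  ring

theorem sum_aeval_coeff_one_add_X_pow_mul (hL : IsMultiplicativeSeq L) {i : ℕ} (hi : 0 < i) :
    ∑ j ∈ range (2 * i + 1), aeval (1 + Polynomial.X ^ i : ℚ[X]).coeff (L j) *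
      aeval (1 + Polynomial.X ^ i : ℚ[X]).coeff (L (2 * i - j)) = 2 * h2 L i i + h1 L i ^ 2 := by
  have hsub : ({0, i, 2 * i} : Finset ℕ) ⊆ range (2 * i + 1) := by
    intro j hj; simp only [mem_insert, mem_singleton] at hj; rw [mem_range]; omega
  have hzero : ∀ j ∈ range (2 * i + 1), j ∉ ({0, i, 2 * i} : Finset ℕ) →
      coeff (single i (j / i)) (L j) * coeff (single i ((2 * i - j) / i)) (L (2 * i - j)) = 0 := by
    intro j hj hj'
    simp only [mem_range, mem_insert, mem_singleton, not_or] at hj hj'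
    have hndvd : ¬ i ∣ j := by
      rintro ⟨q, rfl⟩
      have hq : q < 3 := by nlinarith
      interval_cases q <;> omega
    have hcoeff : coeff (single i (j / i)) (L j) = 0 :=
      (hL.isWeightedHomogeneous j).coeff_eq_zero _ fun h =>
        hndvd (Dvd.intro_left _ (by rwa [weight_single, smul_eq_mul, id] at h))
    rw [hcoeff, zero_mul]
  simp only [hL.aeval_coeff_one_add_X_pow hi]
  rw [← sum_subset hsub hzero, sum_insert (by simp; omega), sum_insert (by simp; omega),
    sum_singleton]
  simp [Nat.mul_div_cancel _ hi, Nat.div_self hi, show 2 * i - i = i by omega, hL.1,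
    h2_self, h1]
  ring

end IsMultiplicativeSeq

theorem two_h2_add_h1 (L : ℕ → MvPolynomial ℕ ℚ) (hL : IsMultiplicativeSeq L)
    (i : ℕ) (hi : 0 < i) :
    2 * h2 L i i + h1 L (2 * i) = (h1 L i) ^ 2 := by
  have key := hL.aeval_coeff_mul (1 + Polynomial.X ^ i : ℚ[X]) (1 + Polynomial.X ^ i)
    (by simp [hi.ne]) (by simp [hi.ne]) (2 * i)
  rw [hL.aeval_coeff_one_add_X_pow_mul_self hi, hL.sum_aeval_coeff_one_add_X_pow_mul hi] at key
  linarith
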